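/- arXiv:math-ph/0607008 — 2 statements merged into one kernel-verified Lean document; each statement's English description precedes it below -/
import Mathlib

section
/- Let M ≥ 1, let S : [0,1] → [0,1] be adapted to the M-equal partition with Markov matrix B, and let φ ∈ L¹([0,1]). Then the quantization of φ∘S is obtained from the quantization of φ by applying B: for every j = 1,…,M, O_{jj}(φ∘S) = ∑_{k=1}^M B_{jk} O_{kk}(φ). -/
open MeasureTheory Set Filter Matrix

noncomputable section

/-- The atom `E_{j+1} = (j/M, (j+1)/M)` of the `M`-equal partition of `[0,1]`
(indexed by `j : Fin M`, zero-based). -/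
def atomE (M : ℕ) (j : Fin M) : Set ℝ :=
  Set.Ioo ((j : ℝ) / M) (((j : ℝ) + 1) / M)

/-- The endpoint set `𝓔(M) = {i/M : 0 ≤ i ≤ M}`. -/
def endpts (M : ℕ) : Set ℝ :=
  {x : ℝ | ∃ i : ℕ, i ≤ M ∧ x = (i : ℝ) / M}

/-- The Markov matrix of `S` for the `M`-equal partition:
`B_{jk} = M · μ(E_j ∩ S⁻¹(E_k))`, where `μ` is Lebesgue measure. -/
def markovB (S : ℝ → ℝ) (M : ℕ) (j k : Fin M) : ℝ :=
  M * (volume (atomE M j ∩ S ⁻¹' atomE M k)).toReal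

/-- `S` is adapted to the `M`-equal partition: on each atom `E_j` it is affine,
`S x = a_j x + c_j` with `a_j ≠ 0`, and the values of the affine map at the two
endpoints of `E_j` belong to `𝓔(M)`. -/
def AdaptedTo (S : ℝ → ℝ) (M : ℕ) : Prop :=
  ∀ j : Fin M, ∃ a c : ℝ, a ≠ 0 ∧ (∀ x ∈ atomE M j, S x = a * x + c) ∧
    a * ((j : ℝ) / M) + c ∈ endpts M ∧ a * (((j : ℝ) + 1) / M) + c ∈ endpts M

/-- `S` preserves Lebesgue measure `μ` on `[0,1]`:
`μ(S⁻¹(A)) = μ(A)` for every Borel `A ⊆ [0,1]` (the preimage taken inside `[0,1]`). -/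
def PreservesLeb (S : ℝ → ℝ) : Prop :=
  ∀ A : Set ℝ, A ⊆ Set.Icc 0 1 → MeasurableSet A →
    volume (Set.Icc (0:ℝ) 1 ∩ S ⁻¹' A) = volume A

/-- `S` is ergodic w.r.t. Lebesgue measure on `[0,1]`: every Borel `A ⊆ [0,1]`
with `S⁻¹(A) = A` has measure `0` or `1`. -/
def ErgodicLeb (S : ℝ → ℝ) : Prop :=
  ∀ A : Set ℝ, A ⊆ Set.Icc 0 1 → MeasurableSet A →
    Set.Icc (0:ℝ) 1 ∩ S ⁻¹' A = A → volume A = 0 ∨ volume A = 1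

/-- `(M_n)` is an admissible sequence of partitions for `S`: positive integers with
`M_n ∣ M_{n+1}`, `S` adapted to each `M_n`-equal partition, and
`S^{-j}(𝓔(M_0)) ∩ [0,1] ⊆ 𝓔(M_n)` for all `1 ≤ j ≤ n`. -/
def AdmissibleSeq (S : ℝ → ℝ) (Mseq : ℕ → ℕ) : Prop :=
  (∀ n, 0 < Mseq n) ∧ (∀ n, Mseq n ∣ Mseq (n + 1)) ∧
  (∀ n, AdaptedTo S (Mseq n)) ∧
  (∀ n j, 1 ≤ j → j ≤ n → (S^[j]) ⁻¹' endpts (Mseq 0) ∩ Set.Icc 0 1 ⊆ endpts (Mseq n))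

/-- The diagonal entry of the quantized observable: `O_{jj}(φ) = M · ∫_{E_j} φ dμ`. -/
def Oquant (φ : ℝ → ℝ) (M : ℕ) (j : Fin M) : ℝ :=
  M * ∫ x in atomE M j, φ x

/-- The local average `φ̂`: equal to `O_{jj}(φ)` on each atom `E_j`, and `0`
on the endpoint set. -/
def hatPhi (φ : ℝ → ℝ) (M : ℕ) (x : ℝ) : ℝ :=
  ∑ j : Fin M, (atomE M j).indicator (fun _ => Oquant φ M j) x

/-- The time average `O_T = (1/T) ∑_{t=0}^{T-1} (U*)^t O U^t`. -/
def timeAvg (M T : ℕ) (U O : Matrix (Fin M) (Fin M) ℂ) : Matrix (Fin M) (Fin M) ℂ :=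
  ((T : ℂ))⁻¹ • ∑ t ∈ Finset.range T, (Uᴴ) ^ t * O * U ^ t

section helpers

lemma affine_embedding (a c : ℝ) (ha : a ≠ 0) : MeasurableEmbedding (fun x : ℝ => a * x + c) :=
  ((Homeomorph.mulLeft₀ a ha).trans (Homeomorph.addRight c)).measurableEmbedding

lemma map_volume_affine (a c : ℝ) (ha : a ≠ 0) :
    Measure.map (fun x : ℝ => a * x + c) volume = ENNReal.ofReal |a⁻¹| • volume := by
  have h : (fun x : ℝ => a * x + c) = (fun x => x + c) ∘ (a * ·) := rfl
  rw [h, ← Measure.map_map (measurable_add_const c) (measurable_const_mul a),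
    Real.map_volume_mul_left ha, Measure.map_smul, map_add_right_eq_self]

lemma vol_preimage_affine (a c : ℝ) (ha : a ≠ 0) {s : Set ℝ} (hs : MeasurableSet s) :
    volume ((fun x : ℝ => a * x + c) ⁻¹' s) = ENNReal.ofReal |a⁻¹| * volume s := by
  rw [← Measure.map_apply (affine_embedding a c ha).measurable hs, map_volume_affine a c ha]
  rfl

lemma setIntegral_affine (a c : ℝ) (ha : a ≠ 0) (φ : ℝ → ℝ) (s : Set ℝ) :
    ∫ x in (fun x : ℝ => a * x + c) ⁻¹' s, φ (a * x + c) = |a⁻¹| * ∫ y in s, φ y := by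
  rw [← (affine_embedding a c ha).setIntegral_map φ s, map_volume_affine a c ha,
    Measure.restrict_smul, integral_smul_measure, ENNReal.toReal_ofReal (abs_nonneg _),
    smul_eq_mul]

lemma affine_mem_iff (a c : ℝ) (ha : a ≠ 0) (l r x : ℝ) (hlr : l < r) :
    a * x + c ∈ Set.Ioo (min (a*l+c) (a*r+c)) (max (a*l+c) (a*r+c)) ↔ x ∈ Set.Ioo l r := by
  rcases ha.lt_or_gt with h | h
  · have h1 : a*r+c < a*l+c := by nlinarith
    rw [min_eq_right h1.le, max_eq_left h1.le]
    simp only [Set.mem_Ioo]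
    constructor <;> intro hx <;> exact ⟨by nlinarith [hx.1, hx.2], by nlinarith [hx.1, hx.2]⟩
  · have h1 : a*l+c < a*r+c := by nlinarith
    rw [min_eq_left h1.le, max_eq_right h1.le]
    simp only [Set.mem_Ioo]
    constructor <;> intro hx <;> exact ⟨by nlinarith [hx.1, hx.2], by nlinarith [hx.1, hx.2]⟩

lemma mem_endpts_of_not_atom (M : ℕ) (hM : 1 ≤ M) (x : ℝ) (hx0 : 0 < x) (hx1 : x < 1)
    (h : ∀ k : Fin M, x ∉ atomE M k) : ∃ i : ℕ, i ≤ M ∧ x = (i : ℝ) / M := by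
  have hM0 : (0:ℝ) < M := by exact_mod_cast hM
  have hxM : x * M < M := by nlinarith
  set i := ⌈x * M⌉₊ with hi
  have hile : (i : ℝ) ≤ M := by exact_mod_cast Nat.ceil_le.2 (le_of_lt (by exact_mod_cast hxM))
  have hiM : i ≤ M := by exact_mod_cast hile
  have hle : x * M ≤ i := Nat.le_ceil _
  rcases eq_or_lt_of_le hle with heq | hlt
  · refine ⟨i, hiM, ?_⟩
    field_simp [← heq]
    exact heq
  · exfalso
    have hi1 : 1 ≤ i := by
      have h0 : (0:ℝ) < (i:ℝ) := lt_trans (by positivity) hlt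
      have : (0:ℕ) < i := by exact_mod_cast h0
      omega
    have hkM : i - 1 < M := by omega
    have hcast : ((i - 1 : ℕ) : ℝ) = (i : ℝ) - 1 := by
      push_cast [Nat.cast_sub hi1]; ring
    have hlow : (i : ℝ) - 1 < x * M := by
      have := Nat.ceil_lt_add_one (by positivity : (0:ℝ) ≤ x * M)
      rw [← hi] at this; linarith
    refine h ⟨i - 1, hkM⟩ ?_
    have hmem : x ∈ Set.Ioo (((i-1:ℕ):ℝ)/M) ((((i-1:ℕ):ℝ)+1)/M) := by
      rw [hcast]
      constructor
      · rw [div_lt_iff₀ hM0]; linarith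
      · rw [lt_div_iff₀ hM0]; linarith
    exact hmem

lemma atom_inter_all_or_nothing (M : ℕ) (hM : 1 ≤ M) (m n : ℕ) (k : Fin M) :
    Ioo ((m:ℝ)/M) ((n:ℝ)/M) ∩ atomE M k = ∅ ∨
      Ioo ((m:ℝ)/M) ((n:ℝ)/M) ∩ atomE M k = atomE M k := by
  have hM0 : (0:ℝ) < M := by exact_mod_cast hM
  have hdiv : ∀ u v : ℕ, u ≤ v → (u:ℝ)/M ≤ (v:ℝ)/M := by
    intro u v huv
    have h' : (u:ℝ) ≤ v := by exact_mod_cast huv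
    gcongr
  have hk1 : ((k:ℝ)+1)/M = (((k:ℕ)+1 : ℕ):ℝ)/M := by push_cast; ring
  rw [atomE, Set.Ioo_inter_Ioo]
  by_cases hc : m ≤ (k:ℕ) ∧ (k:ℕ)+1 ≤ n
  · right
    rw [max_eq_right (hdiv _ _ hc.1), min_eq_right (by rw [hk1]; exact hdiv _ _ hc.2)]
  · left
    rw [Set.Ioo_eq_empty]
    push_neg at hc
    rcases le_or_gt m (k:ℕ) with h1 | h1
    · have h2 : n ≤ (k:ℕ) := by omega
      intro hlt
      have : (n:ℝ)/M ⊓ ((k:ℝ)+1)/M ≤ (m:ℝ)/M ⊔ (k:ℝ)/M :=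
        le_trans (le_trans (min_le_left _ _) (hdiv _ _ h2)) (le_max_right _ _)
      exact absurd hlt (not_lt.2 this)
    · intro hlt
      have : (n:ℝ)/M ⊓ ((k:ℝ)+1)/M ≤ (m:ℝ)/M ⊔ (k:ℝ)/M := by
        refine le_trans (le_trans (min_le_right _ _) ?_) (le_max_left _ _)
        rw [hk1]; exact hdiv _ _ (by omega)
      exact absurd hlt (not_lt.2 this)

lemma atom_disjoint (M : ℕ) (hM : 1 ≤ M) {k k' : Fin M} (h : k ≠ k') :
    Disjoint (atomE M k) (atomE M k') := by
  have hM0 : (0:ℝ) < M := by exact_mod_cast hM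
  have hdiv : ∀ u v : ℕ, u ≤ v → (u:ℝ)/M ≤ (v:ℝ)/M := by
    intro u v huv
    have h' : (u:ℝ) ≤ v := by exact_mod_cast huv
    gcongr
  have key : ∀ u v : Fin M, (u:ℕ) < (v:ℕ) → Disjoint (atomE M u) (atomE M v) := by
    intro u v huv
    rw [atomE, atomE, Set.Ioo_disjoint_Ioo]
    refine le_trans (min_le_left _ _) (le_trans ?_ (le_max_right _ _))
    have : ((u:ℝ)+1)/M = (((u:ℕ)+1 : ℕ):ℝ)/M := by push_cast; ring
    rw [this]; exact hdiv _ _ huv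
  rcases lt_or_gt_of_ne (fun he => h (Fin.ext he) : (k:ℕ) ≠ (k':ℕ)) with hlt | hlt
  · exact key _ _ hlt
  · exact (key _ _ hlt).symm

lemma endpts_finite (M : ℕ) : (endpts M).Finite := by
  have hsub : endpts M ⊆ (fun i : ℕ => (i:ℝ)/M) '' (Set.Iic M) := by
    rintro x ⟨i, hi, rfl⟩
    exact ⟨i, hi, rfl⟩
  exact ((Set.finite_Iic M).image _).subset hsub

end helpers

/-- for `S` adapted to the `M`-equal partition and `φ ∈ L¹([0,1])`,
the quantization of `φ ∘ S` is obtained from that of `φ` by applying the Markov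
matrix: `O_{jj}(φ∘S) = ∑_k B_{jk} O_{kk}(φ)`. -/
theorem stmt_15 (M : ℕ) (hM : 1 ≤ M) (S : ℝ → ℝ) (hSmeas : Measurable S)
    (hSmaps : Set.MapsTo S (Set.Icc 0 1) (Set.Icc 0 1))
    (hadapt : AdaptedTo S M) (φ : ℝ → ℝ)
    (hφ : IntegrableOn φ (Set.Icc (0:ℝ) 1)) :
    ∀ j : Fin M, Oquant (fun x => φ (S x)) M j
      = ∑ k : Fin M, markovB S M j k * Oquant φ M k := by
  have hM0 : (0:ℝ) < M := by exact_mod_cast hM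
  intro j
  obtain ⟨a, c, ha, heq, hp, hq⟩ := hadapt j
  obtain ⟨ip, hipM, hipe⟩ := hp
  obtain ⟨iq, hiqM, hiqe⟩ := hq
  set l : ℝ := (j:ℝ)/M with hl
  set r : ℝ := ((j:ℝ)+1)/M with hr
  have hlr : l < r := by
    rw [hl, hr, div_lt_div_iff_of_pos_right hM0]
    linarith
  set m : ℕ := min ip iq with hm
  set n : ℕ := max ip iq with hn
  set I : Set ℝ := Ioo ((m:ℝ)/M) ((n:ℝ)/M) with hI
  have hmm : (m:ℝ)/M = min (a*l+c) (a*r+c) := by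
    rw [hipe, hiqe, min_div_div_right hM0.le, hm]
    push_cast
    ring
  have hnn : (n:ℝ)/M = max (a*l+c) (a*r+c) := by
    rw [hipe, hiqe, max_div_div_right hM0.le, hn]
    push_cast
    ring
  -- the atom is the preimage of I under the affine map
  have hEI : atomE M j = (fun x : ℝ => a * x + c) ⁻¹' I := by
    ext x
    rw [mem_preimage, hI, hmm, hnn]
    exact (affine_mem_iff a c ha l r x hlr).symm
  -- basic integrability
  have hatom_sub : ∀ k : Fin M, atomE M k ⊆ Icc (0:ℝ) 1 := by
    intro k
    refine Set.Ioo_subset_Icc_self.trans (Set.Icc_subset_Icc (by positivity) ?_)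
    rw [div_le_one hM0]
    have : (k:ℕ) + 1 ≤ M := k.2
    exact_mod_cast this
  have hint : ∀ k : Fin M, IntegrableOn φ (atomE M k) := fun k => hφ.mono_set (hatom_sub k)
  -- all-or-nothing per atom
  have hAON : ∀ k : Fin M, I ∩ atomE M k = ∅ ∨ I ∩ atomE M k = atomE M k := fun k =>
    atom_inter_all_or_nothing M hM m n k
  -- LHS
  have hL : Oquant (fun x => φ (S x)) M j = M * (|a⁻¹| * ∫ y in I, φ y) := by
    rw [Oquant]
    congr 1
    have hmA : MeasurableSet (atomE M j) := measurableSet_Ioo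
    rw [setIntegral_congr_fun hmA
      (fun x hx => congrArg φ (heq x hx) : EqOn (fun x => φ (S x)) (fun x => φ (a*x+c)) (atomE M j))]
    rw [hEI]
    exact setIntegral_affine a c ha φ I
  -- decompose the integral over I
  have hmeasIk : ∀ k : Fin M, MeasurableSet (I ∩ atomE M k) := fun k =>
    (hI ▸ measurableSet_Ioo).inter measurableSet_Ioo
  have hIU : ∫ y in I, φ y = ∑ k : Fin M, ∫ y in I ∩ atomE M k, φ y := by
    have hdisj : Pairwise (Function.onFun Disjoint fun k : Fin M => I ∩ atomE M k) := fun k k' hkk' =>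
      Disjoint.mono inter_subset_right inter_subset_right (atom_disjoint M hM hkk')
    rw [← integral_iUnion_fintype hmeasIk hdisj
      (fun k => (hint k).mono_set inter_subset_right)]
    apply setIntegral_congr_set
    rw [MeasureTheory.ae_eq_set]
    constructor
    · -- I \ ⋃ is contained in the (finite) endpoint set
      have hsub : I \ (⋃ k : Fin M, I ∩ atomE M k) ⊆ endpts M := by
        rintro x ⟨hxI, hxU⟩
        have hx0 : 0 < x := lt_of_le_of_lt (by positivity : (0:ℝ) ≤ (m:ℝ)/M) hxI.1
        have hx1 : x < 1 := lt_of_lt_of_le hxI.2 (by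
          rw [div_le_one hM0]
          have : n ≤ M := max_le hipM hiqM
          exact_mod_cast this)
        have hnk : ∀ k : Fin M, x ∉ atomE M k := fun k hk =>
          hxU (mem_iUnion.2 ⟨k, hxI, hk⟩)
        exact mem_endpts_of_not_atom M hM x hx0 hx1 hnk
      exact measure_mono_null hsub ((endpts_finite M).measure_zero _)
    · have : (⋃ k : Fin M, I ∩ atomE M k) ⊆ I := iUnion_subset fun k => inter_subset_left
      rw [Set.diff_eq_empty.2 this]
      exact measure_empty
  -- RHS term by term
  have hTk : ∀ k : Fin M, atomE M j ∩ S ⁻¹' atomE M k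
      = (fun x : ℝ => a * x + c) ⁻¹' (I ∩ atomE M k) := by
    intro k
    ext x
    simp only [mem_inter_iff, mem_preimage]
    constructor
    · rintro ⟨hxj, hxk⟩
      have h1 : x ∈ (fun x : ℝ => a * x + c) ⁻¹' I := by rw [← hEI]; exact hxj
      have h2 : S x = a * x + c := heq x hxj
      exact ⟨h1, h2 ▸ hxk⟩
    · rintro ⟨hxI, hxk⟩
      have hxj : x ∈ atomE M j := by rw [hEI]; exact hxI
      exact ⟨hxj, by rw [heq x hxj]; exact hxk⟩
  have hterm : ∀ k : Fin M, markovB S M j k * Oquant φ M k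
      = (M:ℝ) * (|a⁻¹| * ∫ y in I ∩ atomE M k, φ y) := by
    intro k
    rw [markovB, hTk k, vol_preimage_affine a c ha ((hI ▸ measurableSet_Ioo).inter measurableSet_Ioo)]
    rcases hAON k with h | h
    · rw [h]
      simp
    · rw [h, atomE, Real.volume_Ioo]
      have h1 : ((k:ℝ)+1)/M - (k:ℝ)/M = 1/M := by ring
      rw [h1, ENNReal.toReal_mul, ENNReal.toReal_ofReal (abs_nonneg _),
        ENNReal.toReal_ofReal (by positivity)]
      rw [Oquant, ← atomE, ← h, atomE]
      have hMne : (M:ℝ) ≠ 0 := hM0.ne'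
      field_simp
  -- assemble
  rw [hL, Finset.sum_congr rfl (fun k _ => hterm k), ← Finset.mul_sum, ← Finset.mul_sum, hIU]
end
end

section
/- (Egorov property.) Let S : [0,1] → [0,1] preserve μ and let (M_n) be an admissible sequence of partitions for S. For each n ≥ 1, let B_n be the Markov matrix of S for the M_n-equal partition and let U_n be an M_n×M_n complex unitary matrix with |(U_n)_{jk}|² = (B_n)_{jk} for all j, k. Then there exists a constant D > 0 depending only on S (not on n or on the observable) such that for every Lipschitz function φ : [0,1] → ℝ with Lipschitz constant L(φ) and every n ≥ 1, ‖U_n O_n(φ) U_n* − O_n(φ∘S)‖ ≤ D·L(φ)/M_n, where O_n(·) is the quantized observable for the M_n-equal partition, U_n* is the conjugate transpose of U_n, and ‖·‖ is the operator norm induced by the Euclidean norm on ℂ^{M_n}. -/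
open MeasureTheory Set Filter Matrix

noncomputable section

lemma euclid_apply {m : ℕ} (A : Matrix (Fin m) (Fin m) ℂ) (x : EuclideanSpace ℂ (Fin m)) (j : Fin m) :
    (Matrix.toEuclideanCLM (𝕜 := ℂ) A x) j = ∑ k, A j k * x k := by
  have h1 := Matrix.ofLp_toEuclideanCLM (𝕜 := ℂ) A x
  have h2 : (WithLp.ofLp (toEuclideanCLM (𝕜 := ℂ) A x)) j
      = (toEuclideanCLM (𝕜 := ℂ) A x) j := rfl
  rw [← h2, h1]
  simp [Matrix.mulVec, dotProduct]

lemma schur_bound {m : ℕ} (A : Matrix (Fin m) (Fin m) ℂ) (r : ℝ) (hr : 0 ≤ r)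
    (hrow : ∀ j, ∑ k, ‖A j k‖ ≤ r)
    (hcol : ∀ k, ∑ j, ‖A j k‖ ≤ r) :
    ‖Matrix.toEuclideanCLM (𝕜 := ℂ) A‖ ≤ r := by
  apply ContinuousLinearMap.opNorm_le_bound _ hr
  intro x
  have hx : 0 ≤ ‖x‖ := norm_nonneg x
  have key : ‖toEuclideanCLM (𝕜 := ℂ) A x‖ ^ 2 ≤ (r * ‖x‖) ^ 2 := by
    rw [EuclideanSpace.norm_eq, Real.sq_sqrt (by positivity)]
    have hj : ∀ j, ‖(toEuclideanCLM (𝕜 := ℂ) A x) j‖ ^ 2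
        ≤ r * ∑ k, ‖A j k‖ * ‖x k‖ ^ 2 := by
      intro j
      rw [euclid_apply]
      have h1 : ‖∑ k, A j k * x k‖ ≤ ∑ k, ‖A j k‖ * ‖x k‖ := by
        refine (norm_sum_le _ _).trans (le_of_eq ?_)
        refine Finset.sum_congr rfl fun k _ => ?_
        rw [norm_mul]
      have h2 : (∑ k, ‖A j k‖ * ‖x k‖) ^ 2
          ≤ (∑ k, ‖A j k‖) * ∑ k, ‖A j k‖ * ‖x k‖ ^ 2 := by
        have := Finset.sum_mul_sq_le_sq_mul_sq Finset.univ
          (fun k => Real.sqrt (‖A j k‖))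
          (fun k => Real.sqrt (‖A j k‖) * ‖x k‖)
        calc (∑ k, ‖A j k‖ * ‖x k‖) ^ 2
            = (∑ k : Fin m, Real.sqrt (‖A j k‖) *
                (Real.sqrt (‖A j k‖) * ‖x k‖)) ^ 2 := by
              congr 1; refine Finset.sum_congr rfl fun k _ => ?_
              rw [← mul_assoc, Real.mul_self_sqrt (norm_nonneg _)]
          _ ≤ (∑ k : Fin m, Real.sqrt (‖A j k‖) ^ 2) *
                ∑ k : Fin m, (Real.sqrt (‖A j k‖) * ‖x k‖) ^ 2 := this
          _ = (∑ k, ‖A j k‖) * ∑ k, ‖A j k‖ * ‖x k‖ ^ 2 := by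
              congr 1
              · refine Finset.sum_congr rfl fun k _ => Real.sq_sqrt (norm_nonneg _)
              · refine Finset.sum_congr rfl fun k _ => ?_
                rw [mul_pow, Real.sq_sqrt (norm_nonneg _)]
      calc ‖∑ k, A j k * x k‖ ^ 2 ≤ (∑ k, ‖A j k‖ * ‖x k‖) ^ 2 := by
            apply pow_le_pow_left₀ (norm_nonneg _) h1
        _ ≤ (∑ k, ‖A j k‖) * ∑ k, ‖A j k‖ * ‖x k‖ ^ 2 := h2
        _ ≤ r * ∑ k, ‖A j k‖ * ‖x k‖ ^ 2 := by
            apply mul_le_mul_of_nonneg_right (hrow j)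
            positivity
    calc ∑ j, ‖(toEuclideanCLM (𝕜 := ℂ) A x) j‖ ^ 2
        ≤ ∑ j, r * ∑ k, ‖A j k‖ * ‖x k‖ ^ 2 :=
          Finset.sum_le_sum fun j _ => hj j
      _ = r * ∑ k, (∑ j, ‖A j k‖) * ‖x k‖ ^ 2 := by
          rw [← Finset.mul_sum, Finset.sum_comm]
          congr 1; refine Finset.sum_congr rfl fun k _ => ?_
          rw [Finset.sum_mul]
      _ ≤ r * ∑ k, r * ‖x k‖ ^ 2 := by
          apply mul_le_mul_of_nonneg_left _ hr
          refine Finset.sum_le_sum fun k _ => ?_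
          apply mul_le_mul_of_nonneg_right (hcol k) (by positivity)
      _ = (r * ‖x‖) ^ 2 := by
          rw [← Finset.mul_sum, EuclideanSpace.norm_eq, mul_pow,
            Real.sq_sqrt (by positivity)]
          ring
  nlinarith [norm_nonneg ((toEuclideanCLM (𝕜 := ℂ) A) x), mul_nonneg hr hx]

lemma volume_atomE {M : ℕ} (hM : 0 < M) (j : Fin M) :
    volume (atomE M j) = ENNReal.ofReal (1 / M) := by
  rw [atomE, Real.volume_Ioo]
  congr 1
  field_simp
  ring

lemma volume_atomE_lt_top {M : ℕ} (j : Fin M) : volume (atomE M j) < ⊤ := by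
  rw [atomE, Real.volume_Ioo]; exact ENNReal.ofReal_lt_top

lemma measurableSet_atomE {M : ℕ} (j : Fin M) : MeasurableSet (atomE M j) :=
  measurableSet_Ioo

lemma atomE_disjoint {M : ℕ} : Pairwise fun j k : Fin M => Disjoint (atomE M j) (atomE M k) := by
  intro j k hjk
  rw [Set.disjoint_left]
  rintro x ⟨hx1, hx2⟩ ⟨hy1, hy2⟩
  have hM : 0 < M := j.pos
  have hMR : (0:ℝ) < M := by exact_mod_cast hM
  rcases lt_or_gt_of_ne hjk with h | h
  · have : ((j : ℝ) + 1) / M ≤ (k : ℝ) / M := by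
      have : ((j : ℝ) + 1) ≤ (k : ℝ) := by exact_mod_cast Nat.succ_le_of_lt h
      gcongr
    linarith
  · have : ((k : ℝ) + 1) / M ≤ (j : ℝ) / M := by
      have : ((k : ℝ) + 1) ≤ (j : ℝ) := by exact_mod_cast Nat.succ_le_of_lt h
      gcongr
    linarith

lemma endpts_subset_Icc {M : ℕ} (hM : 0 < M) : endpts M ⊆ Set.Icc (0:ℝ) 1 := by
  rintro x ⟨i, hi, rfl⟩
  have hMR : (0:ℝ) < M := by exact_mod_cast hM
  constructor
  · positivity
  · rw [div_le_one hMR]; exact_mod_cast hi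

lemma grid_left {M : ℕ} (hM : 0 < M) {p : ℝ} (hp : p ∈ endpts M) {l : Fin M} {z : ℝ}
    (h1 : p < z) (h2 : z < ((l : ℝ) + 1) / M) : p ≤ (l : ℝ) / M := by
  obtain ⟨i, _, rfl⟩ := hp
  have hMR : (0:ℝ) < M := by exact_mod_cast hM
  have : (i : ℝ) < (l : ℝ) + 1 := by
    have := h1.trans h2
    rwa [div_lt_div_iff_of_pos_right hMR] at this
  have : (i : ℝ) ≤ (l : ℝ) := by exact_mod_cast Nat.lt_succ_iff.mp (by exact_mod_cast this)
  gcongr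

lemma grid_right {M : ℕ} (hM : 0 < M) {q : ℝ} (hq : q ∈ endpts M) {l : Fin M} {z : ℝ}
    (h1 : (l : ℝ) / M < z) (h2 : z < q) : ((l : ℝ) + 1) / M ≤ q := by
  obtain ⟨i, _, rfl⟩ := hq
  have hMR : (0:ℝ) < M := by exact_mod_cast hM
  have h3 : (l : ℝ) < (i : ℝ) := by
    have := h1.trans h2
    rwa [div_lt_div_iff_of_pos_right hMR] at this
  have : (l : ℝ) + 1 ≤ (i : ℝ) := by exact_mod_cast Nat.succ_le_of_lt (by exact_mod_cast h3)
  gcongr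

lemma abs_slope_le {S : ℝ → ℝ} {M₀ : ℕ} (hM₀ : 0 < M₀) (h0 : AdaptedTo S M₀)
    {i : Fin M₀} {u v a c : ℝ} (huv : u < v) (hsub : Set.Ioo u v ⊆ atomE M₀ i)
    (hs : ∀ x ∈ Set.Ioo u v, S x = a * x + c) : |a| ≤ M₀ := by
  obtain ⟨a₀, c₀, ha₀, hS₀, hp₀, hq₀⟩ := h0 i
  have hMR : (0:ℝ) < M₀ := by exact_mod_cast hM₀
  set x₁ : ℝ := u + (v - u) / 3 with hx₁
  set x₂ : ℝ := u + 2 * (v - u) / 3 with hx₂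
  have hmem₁ : x₁ ∈ Set.Ioo u v := by constructor <;> (simp only [hx₁]; linarith)
  have hmem₂ : x₂ ∈ Set.Ioo u v := by constructor <;> (simp only [hx₂]; linarith)
  have e₁ : a * x₁ + c = a₀ * x₁ + c₀ := by rw [← hs x₁ hmem₁, hS₀ x₁ (hsub hmem₁)]
  have e₂ : a * x₂ + c = a₀ * x₂ + c₀ := by rw [← hs x₂ hmem₂, hS₀ x₂ (hsub hmem₂)]
  have hx12 : x₂ - x₁ = (v - u) / 3 := by simp only [hx₁, hx₂]; ring
  have haa : a = a₀ := by
    have h1 : (a - a₀) * (x₁ - x₂) = 0 := by linarith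
    rcases mul_eq_zero.mp h1 with h | h
    · linarith
    · exfalso; have : x₂ - x₁ = 0 := by linarith
      rw [hx12] at this; linarith
  have hp01 := endpts_subset_Icc hM₀ hp₀
  have hq01 := endpts_subset_Icc hM₀ hq₀
  have key : a₀ * (((i : ℝ) + 1) / M₀) - a₀ * ((i : ℝ) / M₀) = a₀ / M₀ := by
    field_simp; ring
  have habs : |a₀ / M₀| ≤ 1 := by
    rw [← key]
    have h1 := hp01.1; have h2 := hp01.2; have h3 := hq01.1; have h4 := hq01.2
    rw [abs_le]; constructor <;> nlinarith
  rw [haa]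
  rw [abs_div, abs_of_pos hMR, div_le_one hMR] at habs
  linarith

lemma atom_nested {M₀ M : ℕ} (hM₀ : 0 < M₀) (hdvd : M₀ ∣ M) (j : Fin M) :
    ∃ i : Fin M₀, atomE M j ⊆ atomE M₀ i := by
  obtain ⟨d, rfl⟩ := hdvd
  have hM : 0 < M₀ * d := j.pos
  have hd : 0 < d := by
    rcases Nat.eq_zero_or_pos d with h | h
    · subst h; simp at hM
    · exact h
  refine ⟨⟨j.val / d, ?_⟩, ?_⟩
  · exact Nat.div_lt_of_lt_mul (by have := j.isLt; rw [Nat.mul_comm d M₀]; exact this)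
  · have hMR : (0:ℝ) < (M₀ * d : ℕ) := by exact_mod_cast hM
    have hdR : (0:ℝ) < d := by exact_mod_cast hd
    have hM₀R : (0:ℝ) < M₀ := by exact_mod_cast hM₀
    apply Set.Ioo_subset_Ioo
    · -- (j/d : ℕ)/M₀ ≤ j/(M₀ d)
      have h1 : ((j.val / d : ℕ) : ℝ) * d ≤ (j.val : ℝ) := by
        exact_mod_cast Nat.div_mul_le_self j.val d
      rw [div_le_div_iff₀ hM₀R hMR]
      push_cast
      nlinarith
    · have h2 : (j.val : ℝ) + 1 ≤ (((j.val / d : ℕ) : ℝ) + 1) * d := by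
        have hlt : j.val < (j.val / d + 1) * d := by
          calc j.val = j.val / d * d + j.val % d := by rw [Nat.mul_comm (j.val/d) d]; exact (Nat.div_add_mod _ _).symm
            _ < j.val / d * d + d := Nat.add_lt_add_left (Nat.mod_lt _ hd) _
            _ = (j.val / d + 1) * d := by ring
        exact_mod_cast Nat.succ_le_of_lt hlt
      rw [div_le_div_iff₀ hMR hM₀R]
      push_cast
      push_cast at h2
      nlinarith

lemma abs_slope_le' {S : ℝ → ℝ} {M₀ M : ℕ} (hM₀ : 0 < M₀) (hM : 0 < M)
    (hdvd : M₀ ∣ M) (h0 : AdaptedTo S M₀) {j : Fin M} {a c : ℝ}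
    (hs : ∀ x ∈ atomE M j, S x = a * x + c) : |a| ≤ M₀ := by
  obtain ⟨i, hsub⟩ := atom_nested hM₀ hdvd j
  have hMR : (0:ℝ) < M := by exact_mod_cast hM
  have huv : (j : ℝ) / M < ((j : ℝ) + 1) / M := by gcongr <;> simp [hMR]
  exact abs_slope_le hM₀ h0 huv hsub hs

lemma atomE_subset_Icc {M : ℕ} (j : Fin M) : atomE M j ⊆ Set.Icc (0:ℝ) 1 := by
  have hM : 0 < M := j.pos
  have hMR : (0:ℝ) < M := by exact_mod_cast hM
  rintro x ⟨h1, h2⟩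
  constructor
  · have : (0:ℝ) ≤ (j : ℝ) / M := by positivity
    linarith
  · have hj1 : ((j : ℝ) + 1) / M ≤ 1 := by
      rw [div_le_one hMR]
      exact_mod_cast Nat.succ_le_of_lt j.isLt
    linarith

set_option maxHeartbeats 1000000 in
lemma key_lemma {S : ℝ → ℝ} {M₀ M : ℕ} (hM₀ : 0 < M₀) (hM : 0 < M)
    (hdvd : M₀ ∣ M) (h0 : AdaptedTo S M₀) (hAd : AdaptedTo S M)
    {φ : ℝ → ℝ} {L : ℝ} (hL : 0 ≤ L)
    (hφ : ∀ x ∈ Set.Icc (0:ℝ) 1, ∀ y ∈ Set.Icc (0:ℝ) 1, |φ x - φ y| ≤ L * |x - y|)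
    (j l : Fin M) (hB : markovB S M j l ≠ 0) :
    1 / (M₀ : ℝ) ≤ markovB S M j l ∧
      |Oquant φ M l - Oquant (fun x => φ (S x)) M j| ≤ 2 * M₀ * L / M := by
  obtain ⟨a, c, ha, hSper, hp, hq⟩ := hAd j
  have hMR : (0:ℝ) < M := by exact_mod_cast hM
  have hM₀R : (0:ℝ) < M₀ := by exact_mod_cast hM₀
  have haM₀ : |a| ≤ M₀ := abs_slope_le' hM₀ hM hdvd h0 hSper
  have haR : (0:ℝ) < |a| := abs_pos.mpr ha
  set α : ℝ := (l : ℝ) / M with hα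
  set β : ℝ := ((l : ℝ) + 1) / M with hβ
  have hβα : β - α = 1 / M := by rw [hα, hβ]; field_simp; ring
  set p : ℝ := a * ((j : ℝ) / M) + c with hpdef
  set q : ℝ := a * (((j : ℝ) + 1) / M) + c with hqdef
  have hqp : q - p = a / M := by rw [hpdef, hqdef]; field_simp; ring
  set lo : ℝ := min p q with hlo_def
  set hi : ℝ := max p q with hhi_def
  have hlo : lo ∈ endpts M := by
    rcases min_choice p q with h | h <;> rw [hlo_def, h]
    exacts [hp, hq]
  have hhi : hi ∈ endpts M := by
    rcases max_choice p q with h | h <;> rw [hhi_def, h]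
    exacts [hp, hq]
  have hspan : hi - lo = |a| / M := by
    rw [hhi_def, hlo_def, max_sub_min_eq_abs', abs_sub_comm, hqp, abs_div, abs_of_pos hMR]
  have hmaps : ∀ x ∈ atomE M j, a * x + c ∈ Set.Ioo lo hi := by
    rintro x ⟨hx1, hx2⟩
    rcases ha.lt_or_gt with hneg | hpos
    · have h1 : a * x + c < p := by
        rw [hpdef]
        have : a * x < a * ((j : ℝ) / M) := by exact mul_lt_mul_of_neg_left hx1 hneg
        linarith
      have h2 : q < a * x + c := by
        rw [hqdef]
        have : a * (((j : ℝ) + 1) / M) < a * x := mul_lt_mul_of_neg_left hx2 hneg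
        linarith
      exact ⟨lt_of_le_of_lt (min_le_right p q) h2, lt_of_lt_of_le h1 (le_max_left p q)⟩
    · have h1 : p < a * x + c := by
        rw [hpdef]
        have : a * ((j : ℝ) / M) < a * x := by exact mul_lt_mul_of_pos_left hx1 hpos
        linarith
      have h2 : a * x + c < q := by
        rw [hqdef]
        have : a * x < a * (((j : ℝ) + 1) / M) := mul_lt_mul_of_pos_left hx2 hpos
        linarith
      exact ⟨lt_of_le_of_lt (min_le_left p q) h1, lt_of_lt_of_le h2 (le_max_right p q)⟩
  have hS_atom : ∀ x ∈ atomE M j, S x ∈ Set.Ioo lo hi := fun x hx => by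
    rw [hSper x hx]; exact hmaps x hx
  -- nonemptiness
  have hne : (atomE M j ∩ S ⁻¹' atomE M l).Nonempty := by
    by_contra h
    rw [Set.not_nonempty_iff_eq_empty] at h
    apply hB
    rw [markovB, h, measure_empty]
    simp
  obtain ⟨x₀, hx₀j, hx₀l⟩ := hne
  have hfx₀ : S x₀ ∈ Set.Ioo lo hi := hS_atom x₀ hx₀j
  have hloα : lo ≤ α := grid_left hM hlo hfx₀.1 hx₀l.2
  have hβhi : β ≤ hi := grid_right hM hhi hx₀l.1 hfx₀.2
  -- Part 1 : the interval inside the intersection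
  have hIsub : ∃ u v : ℝ, v - u = 1 / (|a| * M) ∧
      Set.Ioo u v ⊆ atomE M j ∩ S ⁻¹' atomE M l := by
    rcases ha.lt_or_gt with hneg | hpos
    · -- a < 0 : lo = q, hi = p
      have hqltp : q < p := by
        have h2 : q - p < 0 := by rw [hqp]; exact div_neg_of_neg_of_pos hneg hMR
        exact sub_neg.mp h2
      have hlo_q : lo = q := min_eq_right hqltp.le
      have hhi_p : hi = p := max_eq_left hqltp.le
      refine ⟨(β - c) / a, (α - c) / a, ?_, ?_⟩
      · have e1 : (α - c) / a - (β - c) / a = (α - β) / a := by ring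
        have e2 : α - β = -(1 / M) := by linarith [hβα]
        rw [e1, e2, abs_of_neg hneg]
        field_simp
      · rintro x ⟨hx1, hx2⟩
        have hxj : x ∈ atomE M j := by
          constructor
          · -- j/M ≤ (β-c)/a < x, using β ≤ hi = p = a*(j/M)+c
            have hβp : β ≤ a * ((j : ℝ) / M) + c := by rw [← hpdef, ← hhi_p]; exact hβhi
            have : (j : ℝ) / M ≤ (β - c) / a := by
              rw [le_div_iff_of_neg hneg]
              linarith
            linarith
          · have hqα : a * (((j : ℝ) + 1) / M) + c ≤ α := by rw [← hqdef, ← hlo_q]; exact hloα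
            have : (α - c) / a ≤ ((j : ℝ) + 1) / M := by
              rw [div_le_iff_of_neg hneg]
              linarith
            linarith
        refine ⟨hxj, ?_⟩
        show S x ∈ atomE M l
        rw [hSper x hxj]
        constructor
        · have := (lt_div_iff_of_neg hneg).mp hx2
          linarith
        · have := (div_lt_iff_of_neg hneg).mp hx1
          linarith
    · -- a > 0 : lo = p, hi = q
      have hpltq : p < q := by
        have h2 : 0 < q - p := by rw [hqp]; exact div_pos hpos hMR
        exact sub_pos.mp h2
      have hlo_p : lo = p := min_eq_left hpltq.le
      have hhi_q : hi = q := max_eq_right hpltq.le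
      refine ⟨(α - c) / a, (β - c) / a, ?_, ?_⟩
      · have e1 : (β - c) / a - (α - c) / a = (β - α) / a := by ring
        rw [e1, hβα, abs_of_pos hpos]
        field_simp
      · rintro x ⟨hx1, hx2⟩
        have hxj : x ∈ atomE M j := by
          constructor
          · have hpα : a * ((j : ℝ) / M) + c ≤ α := by rw [← hpdef, ← hlo_p]; exact hloα
            have : (j : ℝ) / M ≤ (α - c) / a := by
              rw [le_div_iff₀ hpos]
              nlinarith
            linarith
          · have hβq : β ≤ a * (((j : ℝ) + 1) / M) + c := by rw [← hqdef, ← hhi_q]; exact hβhi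
            have : (β - c) / a ≤ ((j : ℝ) + 1) / M := by
              rw [div_le_iff₀ hpos]
              nlinarith
            linarith
        refine ⟨hxj, ?_⟩
        show S x ∈ atomE M l
        rw [hSper x hxj]
        constructor
        · have := (div_lt_iff₀ hpos).mp hx1
          linarith
        · have := (lt_div_iff₀ hpos).mp hx2
          linarith
  obtain ⟨u, v, hlen, hsub⟩ := hIsub
  have hfin : volume (atomE M j ∩ S ⁻¹' atomE M l) < ⊤ :=
    lt_of_le_of_lt (measure_mono Set.inter_subset_left) (volume_atomE_lt_top j)
  constructor
  · -- Part 1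
    have hvol : volume (Set.Ioo u v) ≤ volume (atomE M j ∩ S ⁻¹' atomE M l) :=
      measure_mono hsub
    rw [Real.volume_Ioo, hlen] at hvol
    have htr := ENNReal.toReal_mono hfin.ne hvol
    rw [ENNReal.toReal_ofReal (by positivity)] at htr
    rw [markovB]
    calc 1 / (M₀ : ℝ) ≤ M * (1 / (|a| * M)) := by
          rw [show (M : ℝ) * (1 / (|a| * M)) = 1 / |a| by field_simp]
          exact one_div_le_one_div_of_le haR haM₀
      _ ≤ M * (volume (atomE M j ∩ S ⁻¹' atomE M l)).toReal := by
          exact mul_le_mul_of_nonneg_left htr (le_of_lt hMR)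
  · -- Part 2
    have hlo01 := endpts_subset_Icc hM hlo
    have hhi01 := endpts_subset_Icc hM hhi
    have hspanle : hi - lo ≤ (M₀ : ℝ) / M := by
      rw [hspan]; gcongr
    have hIoo01 : Set.Ioo lo hi ⊆ Set.Icc (0:ℝ) 1 := fun x hx =>
      ⟨le_trans hlo01.1 hx.1.le, le_trans hx.2.le hhi01.2⟩
    have hEl : atomE M l ⊆ Set.Ioo lo hi := Set.Ioo_subset_Ioo hloα hβhi
    have hconφ : ContinuousOn φ (Set.Icc (0:ℝ) 1) := by
      have hlip : LipschitzOnWith (Real.toNNReal L) φ (Set.Icc (0:ℝ) 1) := by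
        rw [lipschitzOnWith_iff_dist_le_mul]
        intro x hx y hy
        rw [Real.dist_eq, Real.dist_eq, Real.coe_toNNReal L hL]
        exact hφ x hx y hy
      exact hlip.continuousOn
    set K : ℝ := φ lo with hK
    have bound_l : ∀ x ∈ atomE M l, |φ x - K| ≤ L * ((M₀ : ℝ) / M) := by
      intro x hx
      have hx' := hEl hx
      have hx01 : x ∈ Set.Icc (0:ℝ) 1 := hIoo01 hx'
      calc |φ x - K| ≤ L * |x - lo| := hφ x hx01 lo hlo01
        _ ≤ L * ((M₀ : ℝ) / M) := by
            apply mul_le_mul_of_nonneg_left _ hL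
            rw [abs_of_nonneg (by linarith [hx'.1] : (0:ℝ) ≤ x - lo)]
            linarith [hx'.2]
    have bound_j : ∀ x ∈ atomE M j, |φ (S x) - K| ≤ L * ((M₀ : ℝ) / M) := by
      intro x hx
      have hx' := hS_atom x hx
      have hx01 : S x ∈ Set.Icc (0:ℝ) 1 := hIoo01 hx'
      calc |φ (S x) - K| ≤ L * |S x - lo| := hφ (S x) hx01 lo hlo01
        _ ≤ L * ((M₀ : ℝ) / M) := by
            apply mul_le_mul_of_nonneg_left _ hL
            rw [abs_of_nonneg (by linarith [hx'.1] : (0:ℝ) ≤ S x - lo)]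
            linarith [hx'.2]
    -- integrability
    have hmesl : AEStronglyMeasurable φ (volume.restrict (atomE M l)) :=
      (hconφ.mono (fun x hx => hIoo01 (hEl hx))).aestronglyMeasurable (measurableSet_atomE l)
    have hIl : IntegrableOn φ (atomE M l) volume := by
      refine ⟨hmesl, HasFiniteIntegral.restrict_of_bounded (C := |K| + L * ((M₀:ℝ)/M))
        (volume_atomE_lt_top l) ?_⟩
      rw [ae_restrict_iff' (measurableSet_atomE l)]
      filter_upwards with x hx
      rw [Real.norm_eq_abs]
      have h1 := bound_l x hx
      have h2 : |φ x| - |K| ≤ |φ x - K| := by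
        have := abs_sub_abs_le_abs_sub (φ x) K
        linarith
      linarith
    have hmesj : AEStronglyMeasurable (fun x => φ (S x)) (volume.restrict (atomE M j)) := by
      have hcont : ContinuousOn (fun x => φ (a * x + c)) (atomE M j) := by
        apply ContinuousOn.comp hconφ ((continuous_const.mul continuous_id).add
          continuous_const).continuousOn
        intro x hx
        exact hIoo01 (hmaps x hx)
      refine (hcont.aestronglyMeasurable (measurableSet_atomE j)).congr ?_
      rw [Filter.EventuallyEq, ae_restrict_iff' (measurableSet_atomE j)]
      filter_upwards with x hx
      rw [hSper x hx]
    have hIj : IntegrableOn (fun x => φ (S x)) (atomE M j) volume := by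
      refine ⟨hmesj, HasFiniteIntegral.restrict_of_bounded (C := |K| + L * ((M₀:ℝ)/M))
        (volume_atomE_lt_top j) ?_⟩
      rw [ae_restrict_iff' (measurableSet_atomE j)]
      filter_upwards with x hx
      rw [Real.norm_eq_abs]
      have h1 := bound_j x hx
      have h2 : |φ (S x)| - |K| ≤ |φ (S x) - K| := by
        have := abs_sub_abs_le_abs_sub (φ (S x)) K
        linarith
      linarith
    -- average estimates
    have est : ∀ (s : Set ℝ) (f : ℝ → ℝ), MeasurableSet s → volume s = ENNReal.ofReal (1/M) →
        IntegrableOn f s volume → AEStronglyMeasurable f (volume.restrict s) →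
        (∀ x ∈ s, |f x - K| ≤ L * ((M₀ : ℝ)/M)) →
        |(M : ℝ) * (∫ x in s, f x) - K| ≤ (M₀ : ℝ) * L / M := by
      intro s f hms hvs hIf hmf hbd
      have hμs : volume s < ⊤ := by rw [hvs]; exact ENNReal.ofReal_lt_top
      have hint : ∫ x in s, (f x - K) ∂volume = (∫ x in s, f x) - K * (1/M) := by
        rw [integral_sub hIf (integrableOn_const hμs.ne)]
        congr 1
        rw [setIntegral_const, measureReal_def, hvs, ENNReal.toReal_ofReal (by positivity)]
        rw [smul_eq_mul]; ring
      have hnorm := norm_setIntegral_le_of_norm_le_const (μ := volume) (s := s)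
        (f := fun x => f x - K)
        (C := L * ((M₀ : ℝ)/M)) hμs
        (fun x hx => by rw [Real.norm_eq_abs]; exact hbd x hx)
      rw [hint, measureReal_def, hvs, ENNReal.toReal_ofReal (by positivity), Real.norm_eq_abs] at hnorm
      have heq : (M : ℝ) * (∫ x in s, f x) - K = M * ((∫ x in s, f x) - K * (1/M)) := by
        field_simp
      rw [heq, abs_mul, abs_of_pos hMR]
      calc (M:ℝ) * |(∫ x in s, f x) - K * (1/M)|
          ≤ M * (L * ((M₀:ℝ)/M) * (1/M)) := by
            apply mul_le_mul_of_nonneg_left _ (le_of_lt hMR)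
            exact hnorm
        _ = (M₀ : ℝ) * L / M := by field_simp
    have est_l := est (atomE M l) φ (measurableSet_atomE l) (volume_atomE hM l) hIl hmesl bound_l
    have est_j := est (atomE M j) (fun x => φ (S x)) (measurableSet_atomE j) (volume_atomE hM j)
      hIj hmesj bound_j
    rw [Oquant, Oquant]
    set IA : ℝ := (M : ℝ) * (∫ x in atomE M l, φ x) with hIA
    set IB : ℝ := (M : ℝ) * (∫ x in atomE M j, φ (S x)) with hIB
    have htri := abs_sub_le IA K IB
    rw [abs_sub_comm K IB] at htri
    calc |IA - IB| ≤ |IA - K| + |IB - K| := htri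
      _ ≤ (M₀ : ℝ) * L / M + (M₀ : ℝ) * L / M := add_le_add est_l est_j
      _ = 2 * M₀ * L / M := by ring

lemma markovB_nonneg (S : ℝ → ℝ) (M : ℕ) (j l : Fin M) : 0 ≤ markovB S M j l := by
  rw [markovB]; positivity

lemma row_sum_le {S : ℝ → ℝ} (hSmeas : Measurable S) {M : ℕ} (hM : 0 < M) (j : Fin M) :
    ∑ l, markovB S M j l ≤ 1 := by
  have hMR : (0:ℝ) < M := by exact_mod_cast hM
  have hmeas : ∀ l : Fin M, MeasurableSet (atomE M j ∩ S ⁻¹' atomE M l) := fun l =>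
    (measurableSet_atomE j).inter (hSmeas (measurableSet_atomE l))
  have hfin : ∀ l : Fin M, volume (atomE M j ∩ S ⁻¹' atomE M l) ≠ ⊤ := fun l =>
    (lt_of_le_of_lt (measure_mono Set.inter_subset_left) (volume_atomE_lt_top j)).ne
  have hdisj : Pairwise (Function.onFun Disjoint fun l : Fin M => atomE M j ∩ S ⁻¹' atomE M l) := by
    intro l1 l2 h
    exact ((atomE_disjoint h).preimage S).mono Set.inter_subset_right Set.inter_subset_right
  have hsum : ∑ l : Fin M, volume (atomE M j ∩ S ⁻¹' atomE M l)
      = volume (⋃ l : Fin M, atomE M j ∩ S ⁻¹' atomE M l) := by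
    rw [measure_iUnion hdisj hmeas, tsum_fintype]
  have hle : volume (⋃ l : Fin M, atomE M j ∩ S ⁻¹' atomE M l) ≤ volume (atomE M j) :=
    measure_mono (Set.iUnion_subset fun l => Set.inter_subset_left)
  calc ∑ l, markovB S M j l = M * (∑ l : Fin M, volume (atomE M j ∩ S ⁻¹' atomE M l)).toReal := by
        rw [ENNReal.toReal_sum (fun l _ => hfin l), Finset.mul_sum]
        rfl
    _ ≤ M * (volume (atomE M j)).toReal := by
        apply mul_le_mul_of_nonneg_left _ (le_of_lt hMR)
        rw [hsum]
        exact ENNReal.toReal_mono (volume_atomE_lt_top j).ne hle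
    _ = 1 := by
        rw [volume_atomE hM j, ENNReal.toReal_ofReal (by positivity)]
        field_simp

lemma col_sum_le {S : ℝ → ℝ} (hSmeas : Measurable S) (hpres : PreservesLeb S)
    {M : ℕ} (hM : 0 < M) (l : Fin M) : ∑ j, markovB S M j l ≤ 1 := by
  have hMR : (0:ℝ) < M := by exact_mod_cast hM
  have hmeas : ∀ j : Fin M, MeasurableSet (atomE M j ∩ S ⁻¹' atomE M l) := fun j =>
    (measurableSet_atomE j).inter (hSmeas (measurableSet_atomE l))
  have hfin : ∀ j : Fin M, volume (atomE M j ∩ S ⁻¹' atomE M l) ≠ ⊤ := fun j =>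
    (lt_of_le_of_lt (measure_mono Set.inter_subset_left) (volume_atomE_lt_top j)).ne
  have hdisj : Pairwise (Function.onFun Disjoint fun j : Fin M => atomE M j ∩ S ⁻¹' atomE M l) := by
    intro j1 j2 h
    exact (atomE_disjoint h).mono Set.inter_subset_left Set.inter_subset_left
  have hsum : ∑ j : Fin M, volume (atomE M j ∩ S ⁻¹' atomE M l)
      = volume (⋃ j : Fin M, atomE M j ∩ S ⁻¹' atomE M l) := by
    rw [measure_iUnion hdisj hmeas, tsum_fintype]
  have hUsub : (⋃ j : Fin M, atomE M j ∩ S ⁻¹' atomE M l) ⊆ Set.Icc (0:ℝ) 1 ∩ S ⁻¹' atomE M l :=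
    Set.iUnion_subset fun j => Set.inter_subset_inter_left _ (atomE_subset_Icc j)
  have hvol : volume (Set.Icc (0:ℝ) 1 ∩ S ⁻¹' atomE M l) = ENNReal.ofReal (1/M) := by
    rw [hpres (atomE M l) (atomE_subset_Icc l) (measurableSet_atomE l), volume_atomE hM l]
  have hle : volume (⋃ j : Fin M, atomE M j ∩ S ⁻¹' atomE M l) ≤ ENNReal.ofReal (1/M) := by
    rw [← hvol]; exact measure_mono hUsub
  calc ∑ j, markovB S M j l = M * (∑ j : Fin M, volume (atomE M j ∩ S ⁻¹' atomE M l)).toReal := by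
        rw [ENNReal.toReal_sum (fun j _ => hfin j), Finset.mul_sum]
        rfl
    _ ≤ M * (ENNReal.ofReal (1/M)).toReal := by
        apply mul_le_mul_of_nonneg_left _ (le_of_lt hMR)
        rw [hsum]
        exact ENNReal.toReal_mono ENNReal.ofReal_ne_top hle
    _ = 1 := by
        rw [ENNReal.toReal_ofReal (by positivity)]
        field_simp

set_option maxHeartbeats 1000000 in
/-- Egorov property: there is a constant `D > 0` depending only on
`S` such that for every Lipschitz observable `φ` with Lipschitz constant `L` and
every `n ≥ 1`, `‖U_n O_n(φ) U_n* − O_n(φ∘S)‖ ≤ D·L/M_n` in the operator norm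
induced by the Euclidean norm. -/
theorem stmt_17 (S : ℝ → ℝ) (hSmeas : Measurable S)
    (hSmaps : Set.MapsTo S (Set.Icc 0 1) (Set.Icc 0 1))
    (hpres : PreservesLeb S) (Mseq : ℕ → ℕ) (hadm : AdmissibleSeq S Mseq)
    (U : (n : ℕ) → Matrix (Fin (Mseq n)) (Fin (Mseq n)) ℂ)
    (hUuni : ∀ n, U n ∈ Matrix.unitaryGroup (Fin (Mseq n)) ℂ)
    (hUB : ∀ n, ∀ j k : Fin (Mseq n),
      ‖U n j k‖ ^ 2 = markovB S (Mseq n) j k) :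
    ∃ D : ℝ, 0 < D ∧ ∀ (φ : ℝ → ℝ) (L : ℝ),
      (∀ x ∈ Set.Icc (0:ℝ) 1, ∀ y ∈ Set.Icc (0:ℝ) 1, |φ x - φ y| ≤ L * |x - y|) →
      ∀ n : ℕ, 1 ≤ n →
        ‖Matrix.toEuclideanCLM (𝕜 := ℂ)
            (U n * Matrix.diagonal (fun j => (Oquant φ (Mseq n) j : ℂ)) * (U n)ᴴ
              - Matrix.diagonal (fun j => (Oquant (fun x => φ (S x)) (Mseq n) j : ℂ)))‖
          ≤ D * L / Mseq n := by
  obtain ⟨hMpos, hdvdsucc, hadapt, -⟩ := hadm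
  have hdvd0 : ∀ n, Mseq 0 ∣ Mseq n := by
    intro n
    induction n with
    | zero => exact dvd_rfl
    | succ k ih => exact ih.trans (hdvdsucc k)
  set M₀ : ℕ := Mseq 0 with hM₀def
  have hM₀ : 0 < M₀ := hMpos 0
  have hM₀R : (0:ℝ) < M₀ := by exact_mod_cast hM₀
  refine ⟨2 * (M₀ : ℝ) ^ 2 + 1, by positivity, ?_⟩
  intro φ L hφ n hn
  set M : ℕ := Mseq n with hMdef
  have hM : 0 < M := hMpos n
  have hMR : (0:ℝ) < M := by exact_mod_cast hM
  have hL : 0 ≤ L := by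
    have h01 : (0:ℝ) ∈ Set.Icc (0:ℝ) 1 := by constructor <;> norm_num
    have h11 : (1:ℝ) ∈ Set.Icc (0:ℝ) 1 := by constructor <;> norm_num
    have := hφ 0 h01 1 h11
    have habs : |(0:ℝ) - 1| = 1 := by norm_num
    rw [habs, mul_one] at this
    exact le_trans (abs_nonneg _) this
  set Oφ : Fin M → ℂ := fun l => ((Oquant φ M l : ℝ) : ℂ) with hOφ
  set Om : Fin M → ℂ := fun j => ((Oquant (fun x => φ (S x)) M j : ℝ) : ℂ) with hOm
  set V : Matrix (Fin M) (Fin M) ℂ :=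
    U n * Matrix.diagonal Oφ - Matrix.diagonal Om * U n with hV
  have hUU : U n * (U n)ᴴ = 1 := by
    have := Matrix.mem_unitaryGroup_iff.mp (hUuni n)
    rwa [Matrix.star_eq_conjTranspose] at this
  have hUU' : (U n)ᴴ * U n = 1 := by
    have := Matrix.mem_unitaryGroup_iff'.mp (hUuni n)
    rwa [Matrix.star_eq_conjTranspose] at this
  have hId : U n * Matrix.diagonal Oφ * (U n)ᴴ - Matrix.diagonal Om = V * (U n)ᴴ := by
    rw [hV, Matrix.sub_mul, Matrix.mul_assoc (Matrix.diagonal Om), hUU, Matrix.mul_one]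
  -- entrywise bound
  have hVentry : ∀ j l : Fin M, ‖V j l‖
      ≤ Real.sqrt M₀ * markovB S M j l * (2 * M₀ * L / M) := by
    intro j l
    have hVjl : V j l = U n j l * ((Oquant φ M l : ℝ) - (Oquant (fun x => φ (S x)) M j : ℝ) : ℂ) := by
      rw [hV, Matrix.sub_apply, Matrix.mul_diagonal, Matrix.diagonal_mul]
      push_cast
      ring
    have habsV : ‖V j l‖
        = ‖U n j l‖ * |Oquant φ M l - Oquant (fun x => φ (S x)) M j| := by
      rw [hVjl, norm_mul]
      congr 1
      rw [← Real.norm_eq_abs, ← Complex.norm_real]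
      congr 1
      push_cast
      ring
    have hUabs : ‖U n j l‖ = Real.sqrt (markovB S M j l) := by
      rw [← hUB n j l, Real.sqrt_sq (norm_nonneg _)]
    by_cases hB : markovB S M j l = 0
    · rw [habsV, hUabs, hB, Real.sqrt_zero, zero_mul]
      positivity
    · obtain ⟨h1, h2⟩ := key_lemma hM₀ hM (hdvd0 n) (hadapt 0) (hadapt n) hL hφ j l hB
      have hBpos : 0 < markovB S M j l := lt_of_lt_of_le (by positivity) h1
      have hsq : ‖U n j l‖ ≤ Real.sqrt M₀ * markovB S M j l := by
        rw [hUabs]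
        have hBle : markovB S M j l ≤ (M₀ : ℝ) * markovB S M j l ^ 2 := by
          have hMB : 1 ≤ (M₀ : ℝ) * markovB S M j l := by
            have h' := mul_le_mul_of_nonneg_left h1 hM₀R.le
            rwa [mul_one_div, div_self (ne_of_gt hM₀R)] at h'
          nlinarith
        calc Real.sqrt (markovB S M j l) ≤ Real.sqrt ((M₀ : ℝ) * markovB S M j l ^ 2) :=
              Real.sqrt_le_sqrt hBle
          _ = Real.sqrt M₀ * markovB S M j l := by
              rw [Real.sqrt_mul (by positivity), Real.sqrt_sq hBpos.le]
      rw [habsV]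
      exact mul_le_mul hsq h2 (abs_nonneg _) (by positivity)
  -- row and column sums
  have hrow : ∀ j : Fin M, ∑ l, ‖V j l‖ ≤ Real.sqrt M₀ * (2 * M₀ * L / M) := by
    intro j
    calc ∑ l, ‖V j l‖ ≤ ∑ l, Real.sqrt M₀ * markovB S M j l * (2 * M₀ * L / M) :=
          Finset.sum_le_sum fun l _ => hVentry j l
      _ = Real.sqrt M₀ * (2 * M₀ * L / M) * ∑ l, markovB S M j l := by
          rw [Finset.mul_sum]
          exact Finset.sum_congr rfl fun l _ => by ring
      _ ≤ Real.sqrt M₀ * (2 * M₀ * L / M) * 1 := by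
          apply mul_le_mul_of_nonneg_left (row_sum_le hSmeas hM j) (by positivity)
      _ = Real.sqrt M₀ * (2 * M₀ * L / M) := mul_one _
  have hcol : ∀ l : Fin M, ∑ j, ‖V j l‖ ≤ Real.sqrt M₀ * (2 * M₀ * L / M) := by
    intro l
    calc ∑ j, ‖V j l‖ ≤ ∑ j, Real.sqrt M₀ * markovB S M j l * (2 * M₀ * L / M) :=
          Finset.sum_le_sum fun j _ => hVentry j l
      _ = Real.sqrt M₀ * (2 * M₀ * L / M) * ∑ j, markovB S M j l := by
          rw [Finset.mul_sum]
          exact Finset.sum_congr rfl fun j _ => by ring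
      _ ≤ Real.sqrt M₀ * (2 * M₀ * L / M) * 1 := by
          apply mul_le_mul_of_nonneg_left (col_sum_le hSmeas hpres hM l) (by positivity)
      _ = Real.sqrt M₀ * (2 * M₀ * L / M) := mul_one _
  have hVnorm : ‖Matrix.toEuclideanCLM (𝕜 := ℂ) V‖ ≤ Real.sqrt M₀ * (2 * M₀ * L / M) :=
    schur_bound V _ (by positivity) hrow hcol
  -- unitary invariance
  have huni : (Matrix.toEuclideanCLM (𝕜 := ℂ) ((U n)ᴴ)) ∈
      unitary (EuclideanSpace ℂ (Fin M) →L[ℂ] EuclideanSpace ℂ (Fin M)) := by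
    rw [Unitary.mem_iff]
    constructor
    · rw [← map_star, ← _root_.map_mul, Matrix.star_eq_conjTranspose,
        Matrix.conjTranspose_conjTranspose, hUU]
      exact map_one _
    · rw [← map_star, ← _root_.map_mul, Matrix.star_eq_conjTranspose,
        Matrix.conjTranspose_conjTranspose, hUU']
      exact map_one _
  rw [hId, _root_.map_mul]
  rw [CStarRing.norm_mul_mem_unitary _ huni]
  calc ‖Matrix.toEuclideanCLM (𝕜 := ℂ) V‖ ≤ Real.sqrt M₀ * (2 * M₀ * L / M) := hVnorm
    _ ≤ (M₀ : ℝ) * (2 * M₀ * L / M) := by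
        apply mul_le_mul_of_nonneg_right _ (by positivity)
        have h1 : (1:ℝ) ≤ M₀ := by exact_mod_cast hM₀
        nlinarith [Real.sq_sqrt hM₀R.le, Real.sqrt_nonneg (M₀ : ℝ)]
    _ = 2 * (M₀ : ℝ) ^ 2 * L / M := by ring
    _ ≤ (2 * (M₀ : ℝ) ^ 2 + 1) * L / M := by
        gcongr
        linarith
end
end
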